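/- Let n ∈ ℕ, n−1 < α ≤ n, let I ⊆ ℝ be an open interval, f : I → (0,∞) smooth, β ∈ I, λ₂ ∈ ℝ with λ₂ ≠ 0, g(x) = λ₂ √(f(x)) + f'(x)/2, a ∈ ℝ, λ = a(a+λ₂), and c_{k,1}, c_{k,2} ∈ ℝ for k = 1,…,n. Define u(x,t) = f(x)^{−1/2} exp(a ω_0(x)) φ(t) and v(x,t) = exp(a ω_0(x)) ψ(t), where φ(t) = Σ_{k=1}^n c_{k,1} t^{α−k} E_{2α,1+α−k}(λ t^{2α}) + a Σ_{k=1}^n c_{k,2} t^{2α−k} E_{2α,1+2α−k}(λ t^{2α}) and ψ(t) = (a+λ₂) Σ_{k=1}^n c_{k,1} t^{2α−k} E_{2α,1+2α−k}(λ t^{2α}) + Σ_{k=1}^n c_{k,2} t^{α−k} E_{2α,1+α−k}(λ t^{2α}). Then ∂^α_t u = ∂_x v and ∂^α_t v = f(x) ∂_x u + g(x) u hold on I × (0,∞). -/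

import Mathlib

open MeasureTheory Real Set
open scoped NNReal ENNReal

noncomputable section

/-- The Riemann–Liouville kernel: for `α = n` it is `h` itself; for `n - 1 < α < n`
it is the fractional integral of order `n - α` of `h`. -/
def rlKernel (n : ℕ) (α : ℝ) (h : ℝ → ℝ) : ℝ → ℝ :=
  if α = (n : ℝ) then h
  else fun t => (Real.Gamma ((n : ℝ) - α))⁻¹ *
    ∫ s in (0:ℝ)..t, h s * (t - s) ^ ((n : ℝ) - α - 1)

/-- The Riemann–Liouville fractional derivative of order `α` (with `n - 1 < α ≤ n`). -/
def rlDeriv (n : ℕ) (α : ℝ) (h : ℝ → ℝ) : ℝ → ℝ :=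
  iteratedDeriv n (rlKernel n α h)

/-- The Riemann–Liouville derivative of order `α` of `h` exists on `(0, ∞)`. -/
def HasRLDerivOn (n : ℕ) (α : ℝ) (h : ℝ → ℝ) : Prop :=
  ContDiffOn ℝ n (rlKernel n α h) (Set.Ioi 0)

/-- The two-parameter Mittag–Leffler function `E_{ρ,b}(z) = Σ_{j≥0} z^j / Γ(ρj + b)`,
with the convention that `1/Γ` vanishes at the poles of `Γ` (Mathlib's `Real.Gamma`
is `0` there). -/
def mittagLeffler (ρ b z : ℝ) : ℝ :=
  ∑' j : ℕ, z ^ j / Real.Gamma (ρ * j + b)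

lemma gamma_mono {x y : ℝ} (hx : 2 ≤ x) (hxy : x ≤ y) :
    Real.Gamma x ≤ Real.Gamma y :=
  Real.Gamma_strictMonoOn_Ici.monotoneOn hx (le_trans hx hxy) hxy

lemma sumGamma {ρ : ℝ} (hρ : 0 < ρ) (A : ℝ) (hA : 0 ≤ A) (q : ℝ) :
    Summable fun j : ℕ => A ^ j / |Real.Gamma (q + ρ * j)| := by
  rcases eq_or_lt_of_le hA with h0 | hA
  · rw [← summable_nat_add_iff 1]
    refine Summable.congr summable_zero fun j => ?_
    simp [← h0, zero_pow (Nat.succ_ne_zero j)]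
  obtain ⟨K, hK⟩ := exists_nat_ge (1 / ρ)
  have hρK : 1 ≤ ρ * K := by
    rw [div_le_iff₀ hρ] at hK; linarith
  obtain ⟨J, hJ⟩ := exists_nat_ge ((max 2 (2 * A ^ K) - q) / ρ)
  have hJ' : max 2 (2 * A ^ K) ≤ q + ρ * J := by
    rw [div_le_iff₀ hρ] at hJ; linarith
  set c := q + ρ * J with hc
  have hc2 : 2 ≤ c := le_trans (le_max_left _ _) hJ'
  have hcA : 2 * A ^ K ≤ c := le_trans (le_max_right _ _) hJ'
  have hΓpos : ∀ j : ℕ, 0 < Real.Gamma (c + ρ * j) := by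
    intro j
    apply Real.Gamma_pos_of_pos
    have : (0:ℝ) ≤ ρ * j := by positivity
    linarith
  set b : ℕ → ℝ := fun j => A ^ j / Real.Gamma (c + ρ * j) with hb
  have hbnonneg : ∀ j, 0 ≤ b j := fun j => by
    have := hΓpos j
    have : (0:ℝ) ≤ A ^ j := by positivity
    simp only [hb]; positivity
  have hKpos : 0 < K := by
    rcases Nat.eq_zero_or_pos K with h | h
    · exfalso; rw [h] at hρK; push_cast at hρK; linarith
    · exact h
  have hAK : (0:ℝ) < A ^ K := pow_pos hA K
  have hblock : ∀ j : ℕ, b (j + K) ≤ b j / 2 := by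
    intro j
    have hρj : (0:ℝ) ≤ ρ * j := by positivity
    have h2 : Real.Gamma ((c + ρ * j) + 1) = (c + ρ * j) * Real.Gamma (c + ρ * j) :=
      Real.Gamma_add_one (by linarith)
    have h1 : Real.Gamma ((c + ρ * j) + 1) ≤ Real.Gamma (c + ρ * (j + K)) := by
      apply gamma_mono (by linarith)
      push_cast; nlinarith
    have h3 : 2 * A ^ K * Real.Gamma (c + ρ * j) ≤ Real.Gamma (c + ρ * (j + K)) := by
      refine le_trans ?_ h1
      rw [h2]
      have := hΓpos j
      nlinarith
    have step : b (j + K) ≤ A ^ (j + K) / (2 * A ^ K * Real.Gamma (c + ρ * j)) := by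
      have hcast : c + ρ * ((j + K : ℕ) : ℝ) = c + ρ * ((j:ℝ) + (K:ℝ)) := by push_cast; ring
      simp only [hb, hcast]
      exact div_le_div_of_nonneg_left (by positivity) (by have := hΓpos j; positivity) h3
    refine step.trans_eq ?_
    have := (hΓpos j).ne'
    rw [pow_add, hb]
    field_simp
  set M : ℝ := ∑ r ∈ Finset.range K, b r with hM
  have hMnonneg : 0 ≤ M := Finset.sum_nonneg fun r _ => hbnonneg r
  have hclaim : ∀ j : ℕ, b j ≤ M * (1/2 : ℝ) ^ (j / K) := by
    intro j
    induction j using Nat.strong_induction_on with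
    | _ j IH =>
      rcases lt_or_ge j K with hj | hj
      · rw [Nat.div_eq_of_lt hj, pow_zero, mul_one]
        exact Finset.single_le_sum (fun r _ => hbnonneg r) (Finset.mem_range.mpr hj)
      · have hsub : j - K + K = j := Nat.sub_add_cancel hj
        have hlt : j - K < j := Nat.sub_lt (lt_of_lt_of_le hKpos hj) hKpos
        have := hblock (j - K)
        rw [hsub] at this
        refine this.trans ?_
        have IH' := IH (j - K) hlt
        have hdiv : (j - K) / K + 1 = j / K := (Nat.div_eq_sub_div hKpos hj).symm
        calc b (j - K) / 2 ≤ (M * (1/2:ℝ) ^ ((j - K) / K)) / 2 := by linarith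
          _ = M * (1/2:ℝ) ^ ((j - K) / K + 1) := by rw [pow_succ]; ring
          _ = M * (1/2:ℝ) ^ (j / K) := by rw [hdiv]
  set w : ℝ := (1/2 : ℝ) ^ ((K:ℝ)⁻¹) with hw
  have hw0 : 0 ≤ w := by positivity
  have hw1 : w < 1 := by
    apply Real.rpow_lt_one (by norm_num) (by norm_num)
    simp [hKpos]
  have hgeom : Summable fun j : ℕ => (M * 2) * w ^ j :=
    (summable_geometric_of_lt_one hw0 hw1).mul_left _
  have hbound : ∀ j : ℕ, b j ≤ (M * 2) * w ^ j := by
    intro j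
    have hKR : (0:ℝ) < (K:ℝ) := by exact_mod_cast hKpos
    have h1 : ((j:ℝ)/(K:ℝ) - 1) ≤ ((j / K : ℕ) : ℝ) := by
      have hj : j < (j / K + 1) * K := (Nat.div_lt_iff_lt_mul hKpos).mp (Nat.lt_succ_self _)
      have : (j:ℝ) < ((j / K : ℕ) + 1) * K := by exact_mod_cast hj
      rw [div_sub_one hKR.ne', div_le_iff₀ hKR]
      linarith
    have e1 : ((1:ℝ)/2) ^ (j / K) = ((1:ℝ)/2) ^ (((j/K : ℕ)):ℝ) := (Real.rpow_natCast _ _).symm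
    have e2 : w ^ j = ((1:ℝ)/2) ^ ((K:ℝ)⁻¹ * j) := by
      rw [hw, ← Real.rpow_natCast w j, hw, ← Real.rpow_mul (by norm_num : (0:ℝ) ≤ 1/2)]
    have e3 : ((1:ℝ)/2) ^ ((j:ℝ)/(K:ℝ) - 1) = 2 * ((1:ℝ)/2) ^ ((K:ℝ)⁻¹ * j) := by
      rw [Real.rpow_sub (by norm_num), Real.rpow_one]
      rw [div_eq_mul_inv (j:ℝ), mul_comm (j:ℝ)]
      ring
    have h2 : ((1:ℝ)/2) ^ (j / K) ≤ 2 * w ^ j := by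
      rw [e1, e2, ← e3]
      exact Real.rpow_le_rpow_of_exponent_ge (by norm_num) (by norm_num) h1
    calc b j ≤ M * ((1:ℝ)/2) ^ (j / K) := hclaim j
      _ ≤ M * (2 * w ^ j) := mul_le_mul_of_nonneg_left h2 hMnonneg
      _ = (M * 2) * w ^ j := by ring
  have hbsum : Summable b := Summable.of_nonneg_of_le hbnonneg hbound hgeom
  rw [← summable_nat_add_iff J]
  refine (hbsum.mul_left (A ^ J)).congr fun j => ?_
  have harg : q + ρ * ((j + J : ℕ) : ℝ) = c + ρ * j := by push_cast [hc]; ring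
  rw [harg, abs_of_pos (hΓpos j), hb]
  simp only
  rw [pow_add]
  ring

/-- Generalized power-series building block `Σ_j lam^j t^(p+ρj) / Γ(p+ρj+1)`. -/
noncomputable def Sml (ρ lam p : ℝ) : ℝ → ℝ := fun t =>
  ∑' j : ℕ, lam ^ j * t ^ (p + ρ * j) / Real.Gamma (p + ρ * j + 1)

lemma sml_term_abs {ρ lam p : ℝ} {t : ℝ} (ht : 0 < t) (j : ℕ) :
    |lam ^ j * t ^ (p + ρ * j) / Real.Gamma (p + ρ * j + 1)|
      = t ^ p * ((|lam| * t ^ ρ) ^ j / |Real.Gamma ((p+1) + ρ * j)|) := by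
  have h1 : t ^ (p + ρ * j) = t ^ p * (t ^ ρ) ^ j := by
    rw [Real.rpow_add ht, ← Real.rpow_natCast (t ^ ρ) j, ← Real.rpow_mul ht.le]
  have h2 : p + ρ * j + 1 = (p + 1) + ρ * j := by ring
  rw [h2, h1, abs_div, abs_mul, abs_mul, abs_pow, abs_pow,
    abs_of_pos (Real.rpow_pos_of_pos ht _), abs_of_pos (Real.rpow_pos_of_pos ht _), mul_pow]
  ring

lemma sml_summable_abs {ρ : ℝ} (hρ : 0 < ρ) (lam p : ℝ) {t : ℝ} (ht : 0 < t) :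
    Summable fun j : ℕ => |lam ^ j * t ^ (p + ρ * j) / Real.Gamma (p + ρ * j + 1)| := by
  refine Summable.congr ?_ fun j => (sml_term_abs ht j).symm
  exact (sumGamma hρ (|lam| * t ^ ρ) (by positivity) (p + 1)).mul_left _

lemma sml_summable {ρ : ℝ} (hρ : 0 < ρ) (lam p : ℝ) {t : ℝ} (ht : 0 < t) :
    Summable fun j : ℕ => lam ^ j * t ^ (p + ρ * j) / Real.Gamma (p + ρ * j + 1) :=
  (sml_summable_abs hρ lam p ht).of_abs

/-- Termwise derivative: always true for `t > 0`, thanks to the `Γ = 0` convention. -/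
lemma sml_term_hasDerivAt (ρ lam p : ℝ) (j : ℕ) {t : ℝ} (ht : 0 < t) :
    HasDerivAt (fun s => lam ^ j * s ^ (p + ρ * j) / Real.Gamma (p + ρ * j + 1))
      (lam ^ j * t ^ ((p - 1) + ρ * j) / Real.Gamma ((p - 1) + ρ * j + 1)) t := by
  set e : ℝ := p + ρ * j with he
  have he1 : (p - 1) + ρ * j = e - 1 := by rw [he]; ring
  have he2 : (p - 1) + ρ * j + 1 = e := by rw [he]; ring
  rw [he1]
  rw [show e - 1 + 1 = e by ring]
  by_cases hpole : ∃ m : ℕ, e = -(m : ℝ)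
  · obtain ⟨m, hm⟩ := hpole
    rcases Nat.eq_zero_or_pos m with h0 | hmpos
    · -- e = 0 : the function is constant
      have he0 : e = 0 := by rw [hm, h0]; simp
      have : (fun s : ℝ => lam ^ j * s ^ (p + ρ * j) / Real.Gamma (p + ρ * j + 1))
          = fun _ => lam ^ j * 1 / Real.Gamma (p + ρ * j + 1) := by
        funext s; rw [← he, he0, Real.rpow_zero]
      rw [this]
      have : lam ^ j * t ^ (e - 1) / Real.Gamma e = 0 := by
        rw [he0, Real.Gamma_zero, div_zero]
      rw [this]
      exact hasDerivAt_const _ _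
    · -- e = -m, m ≥ 1 : Γ(e+1) = 0, function is identically 0
      have hΓ1 : Real.Gamma (e + 1) = 0 := by
        have : e + 1 = -((m - 1 : ℕ) : ℝ) := by
          rw [hm]; push_cast [Nat.cast_sub hmpos]; ring
        rw [this]; exact Real.Gamma_neg_nat_eq_zero _
      have hΓ2 : Real.Gamma e = 0 := by
        rw [hm]; exact Real.Gamma_neg_nat_eq_zero _
      have hfun : (fun s : ℝ => lam ^ j * s ^ (p + ρ * j) / Real.Gamma (p + ρ * j + 1))
          = fun _ => 0 := by
        funext s; rw [← he, hΓ1, div_zero]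
      rw [hfun, hΓ2, div_zero]
      exact hasDerivAt_const _ _
  · push_neg at hpole
    have he0 : e ≠ 0 := by
      intro h; exact hpole 0 (by simp [h])
    have hΓe : Real.Gamma e ≠ 0 := Real.Gamma_ne_zero hpole
    have hrec : Real.Gamma (e + 1) = e * Real.Gamma e := Real.Gamma_add_one he0
    have hd : HasDerivAt (fun s : ℝ => s ^ e) (e * t ^ (e - 1)) t :=
      Real.hasDerivAt_rpow_const (Or.inl ht.ne')
    have := (hd.const_mul (lam ^ j)).div_const (Real.Gamma (e + 1))
    refine this.congr_deriv ?_
    rw [hrec, mul_left_comm, mul_div_mul_left _ _ he0]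

/-- The series `Sml` differentiates termwise on `(0,∞)`. -/
lemma sml_hasDerivAt {ρ : ℝ} (hρ : 0 < ρ) (lam p : ℝ) {t : ℝ} (ht : 0 < t) :
    HasDerivAt (Sml ρ lam p) (Sml ρ lam (p - 1) t) t := by
  set l : ℝ := t / 2 with hl
  set r : ℝ := t + 1 with hr
  have hl0 : 0 < l := by positivity
  have hr0 : 0 < r := by positivity
  set u : ℕ → ℝ := fun j =>
    l ^ (p - 1) * ((|lam| * l ^ ρ) ^ j / |Real.Gamma (p + ρ * j)|)
    + r ^ (p - 1) * ((|lam| * r ^ ρ) ^ j / |Real.Gamma (p + ρ * j)|) with hu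
  have husum : Summable u := by
    refine Summable.add ?_ ?_
    · exact (sumGamma hρ (|lam| * l ^ ρ) (by positivity) p).mul_left _
    · exact (sumGamma hρ (|lam| * r ^ ρ) (by positivity) p).mul_left _
  have key : ∀ (j : ℕ) (y : ℝ), y ∈ Set.Ioo l r →
      ‖lam ^ j * y ^ ((p - 1) + ρ * j) / Real.Gamma ((p - 1) + ρ * j + 1)‖ ≤ u j := by
    intro j y hy
    have hy0 : 0 < y := lt_trans hl0 hy.1
    rw [Real.norm_eq_abs, sml_term_abs hy0 j]
    have harg : (p - 1) + 1 + ρ * j = p + ρ * j := by ring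
    rw [harg]
    have hyc : y ^ (p - 1 + ρ * j) ≤ l ^ (p - 1 + ρ * j) + r ^ (p - 1 + ρ * j) := by
      rcases le_or_gt 0 (p - 1 + ρ * j) with hc | hc
      · refine le_trans (Real.rpow_le_rpow hy0.le hy.2.le hc) ?_
        have : (0:ℝ) ≤ l ^ (p - 1 + ρ * j) := (Real.rpow_pos_of_pos hl0 _).le
        linarith
      · refine le_trans (Real.rpow_le_rpow_of_nonpos hl0 hy.1.le hc.le) ?_
        have : (0:ℝ) ≤ r ^ (p - 1 + ρ * j) := (Real.rpow_pos_of_pos hr0 _).le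
        linarith
    have hwl : y ^ (p-1) * ((|lam| * y ^ ρ) ^ j / |Real.Gamma (p + ρ * j)|)
        ≤ (l ^ (p-1+ρ*j) + r ^ (p-1+ρ*j)) * (|lam| ^ j / |Real.Gamma (p + ρ * j)|) := by
      have hsplit : ∀ z : ℝ, 0 < z → z ^ (p-1) * ((|lam| * z ^ ρ) ^ j / |Real.Gamma (p + ρ * j)|)
          = z ^ (p-1+ρ*j) * (|lam| ^ j / |Real.Gamma (p + ρ * j)|) := by
        intro z hz
        rw [mul_pow, Real.rpow_add hz, ← Real.rpow_natCast (z ^ ρ) j, ← Real.rpow_mul hz.le]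
        ring
      rw [hsplit y hy0]
      apply mul_le_mul_of_nonneg_right hyc
      positivity
    refine hwl.trans ?_
    have hsplit : ∀ z : ℝ, 0 < z → z ^ (p-1+ρ*j) * (|lam| ^ j / |Real.Gamma (p + ρ * j)|)
        = z ^ (p-1) * ((|lam| * z ^ ρ) ^ j / |Real.Gamma (p + ρ * j)|) := by
      intro z hz
      rw [mul_pow, Real.rpow_add hz, ← Real.rpow_natCast (z ^ ρ) j, ← Real.rpow_mul hz.le]
      ring
    rw [hu, add_mul, hsplit l hl0, hsplit r hr0]
  have hmem : t ∈ Set.Ioo l r := ⟨by rw [hl]; linarith, by rw [hr]; linarith⟩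
  have := hasDerivAt_tsum_of_isPreconnected husum isOpen_Ioo
    (convex_Ioo l r).isPreconnected
    (fun j y hy => sml_term_hasDerivAt ρ lam p j (lt_trans hl0 hy.1))
    key hmem (sml_summable hρ lam p ht) hmem
  exact this

/-- Finite linear combinations of `Sml` functions. -/
noncomputable def combo {ι : Type*} (ρ lam : ℝ) (s : Finset ι) (d : ι → ℝ) (p : ι → ℝ) :
    ℝ → ℝ := fun t => ∑ k ∈ s, d k * Sml ρ lam (p k) t

lemma combo_hasDerivAt {ι : Type*} {ρ : ℝ} (hρ : 0 < ρ) (lam : ℝ) (s : Finset ι)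
    (d p : ι → ℝ) {t : ℝ} (ht : 0 < t) :
    HasDerivAt (combo ρ lam s d p) (combo ρ lam s d (fun k => p k - 1) t) t :=
  HasDerivAt.fun_sum fun k _ => (sml_hasDerivAt hρ lam (p k) ht).const_mul (d k)

lemma iteratedDeriv_eqOn_Ioi {F G : ℝ → ℝ} (h : Set.EqOn F G (Set.Ioi 0)) (m : ℕ) :
    Set.EqOn (iteratedDeriv m F) (iteratedDeriv m G) (Set.Ioi 0) := by
  induction m with
  | zero => simpa using h
  | succ m IH =>
    intro t ht
    rw [iteratedDeriv_succ, iteratedDeriv_succ]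
    exact Filter.EventuallyEq.deriv_eq
      (Filter.eventuallyEq_of_mem (isOpen_Ioi.mem_nhds ht) IH)

lemma combo_iteratedDeriv {ι : Type*} {ρ : ℝ} (hρ : 0 < ρ) (lam : ℝ) (s : Finset ι)
    (d p : ι → ℝ) (m : ℕ) :
    Set.EqOn (iteratedDeriv m (combo ρ lam s d p))
      (combo ρ lam s d (fun k => p k - m)) (Set.Ioi 0) := by
  induction m with
  | zero => intro t _; simp [iteratedDeriv_zero]
  | succ m IH =>
    intro t ht
    rw [iteratedDeriv_succ]
    have h1 : deriv (iteratedDeriv m (combo ρ lam s d p)) t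
        = deriv (combo ρ lam s d (fun k => p k - m)) t :=
      Filter.EventuallyEq.deriv_eq (Filter.eventuallyEq_of_mem (isOpen_Ioi.mem_nhds ht) IH)
    rw [h1, (combo_hasDerivAt hρ lam s d _ ht).deriv]
    have : (fun k => p k - (m:ℝ) - 1) = fun k => p k - ((m+1 : ℕ) : ℝ) := by
      funext k; push_cast; ring
    rw [← this]

lemma iteratedDeriv_const_mul'' (c : ℝ) (F : ℝ → ℝ) (m : ℕ) :
    iteratedDeriv m (fun t => c * F t) = fun t => c * iteratedDeriv m F t := by
  induction m with
  | zero => simp [iteratedDeriv_zero]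
  | succ m IH =>
    rw [iteratedDeriv_succ, IH, iteratedDeriv_succ]
    funext t
    exact deriv_const_mul_field c

lemma sml_shift {ρ : ℝ} (hρ : 0 < ρ) (lam : ℝ) {k : ℕ} (hk : 1 ≤ k) {t : ℝ} (ht : 0 < t) :
    Sml ρ lam (-(k:ℝ)) t = lam * Sml ρ lam (ρ - k) t := by
  unfold Sml
  rw [Summable.tsum_eq_zero_add (sml_summable hρ lam _ ht)]
  have h0 : lam ^ 0 * t ^ (-(k:ℝ) + ρ * (0:ℕ)) / Real.Gamma (-(k:ℝ) + ρ * (0:ℕ) + 1) = 0 := by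
    have : -(k:ℝ) + ρ * ((0:ℕ):ℝ) + 1 = -(((k - 1 : ℕ)):ℝ) := by
      push_cast [Nat.cast_sub hk]; ring
    rw [this, Real.Gamma_neg_nat_eq_zero, div_zero]
  rw [h0, zero_add, ← tsum_mul_left]
  congr 1
  funext j
  have e1 : -(k:ℝ) + ρ * ((j+1 : ℕ):ℝ) = (ρ - k) + ρ * j := by push_cast; ring
  rw [e1, pow_succ]
  ring

lemma beta01_intervalIntegrable {u v : ℝ} (hu : 0 < u) (hv : 0 < v) :
    IntervalIntegrable (fun x : ℝ => x ^ (u - 1) * (1 - x) ^ (v - 1)) MeasureTheory.volume 0 1 := by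
  have hc := Complex.betaIntegral_convergent (u := (u:ℂ)) (v := (v:ℂ)) (by simpa) (by simpa)
  have hre : IntervalIntegrable
      (fun x : ℝ => ((x:ℂ) ^ ((u:ℂ) - 1) * ((1:ℂ) - (x:ℂ)) ^ ((v:ℂ) - 1)).re)
      MeasureTheory.volume 0 1 := by
    rw [intervalIntegrable_iff] at hc ⊢
    exact hc.re
  refine hre.congr ?_
  intro x hx
  beta_reduce
  rw [Set.uIoc_of_le (by norm_num : (0:ℝ) ≤ 1)] at hx
  have hx0 : 0 ≤ x := le_of_lt hx.1
  have hx1 : 0 ≤ 1 - x := by linarith [hx.2]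
  rw [show ((u:ℂ) - 1) = ((u - 1 : ℝ) : ℂ) by push_cast; ring,
    show ((v:ℂ) - 1) = ((v - 1 : ℝ) : ℂ) by push_cast; ring,
    show ((1:ℂ) - (x:ℂ)) = ((1 - x : ℝ) : ℂ) by push_cast; ring,
    ← Complex.ofReal_cpow hx0, ← Complex.ofReal_cpow hx1, ← Complex.ofReal_mul]
  simp

lemma beta01_integral {u v : ℝ} (hu : 0 < u) (hv : 0 < v) :
    ∫ x in (0:ℝ)..1, x ^ (u - 1) * (1 - x) ^ (v - 1)
      = Real.Gamma u * Real.Gamma v / Real.Gamma (u + v) := by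
  have key : Complex.betaIntegral (u:ℂ) (v:ℂ)
      = ((∫ x in (0:ℝ)..1, x ^ (u - 1) * (1 - x) ^ (v - 1) : ℝ) : ℂ) := by
    rw [Complex.betaIntegral, ← intervalIntegral.integral_ofReal]
    refine intervalIntegral.integral_congr fun x hx => ?_
    rw [Set.uIcc_of_le (by norm_num : (0:ℝ) ≤ 1)] at hx
    have hx0 : 0 ≤ x := hx.1
    have hx1 : 0 ≤ 1 - x := by linarith [hx.2]
    rw [show ((u:ℂ) - 1) = ((u - 1 : ℝ) : ℂ) by push_cast; ring,
      show ((v:ℂ) - 1) = ((v - 1 : ℝ) : ℂ) by push_cast; ring,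
      show ((1:ℂ) - (x:ℂ)) = ((1 - x : ℝ) : ℂ) by push_cast; ring,
      ← Complex.ofReal_cpow hx0, ← Complex.ofReal_cpow hx1, ← Complex.ofReal_mul]
  have hG : Complex.Gamma ((u:ℂ) + (v:ℂ)) ≠ 0 := by
    rw [show ((u:ℂ) + (v:ℂ)) = ((u + v : ℝ) : ℂ) by push_cast; ring, Complex.Gamma_ofReal]
    exact_mod_cast Complex.ofReal_ne_zero.mpr
      (Real.Gamma_pos_of_pos (by linarith)).ne'
  have hmul := Complex.Gamma_mul_Gamma_eq_betaIntegral
    (s := (u:ℂ)) (t := (v:ℂ)) (by simpa) (by simpa)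
  rw [key] at hmul
  have : ((Real.Gamma u * Real.Gamma v : ℝ) : ℂ)
      = ((Real.Gamma (u + v) : ℝ) : ℂ) * ((∫ x in (0:ℝ)..1, x ^ (u-1) * (1-x) ^ (v-1) : ℝ) : ℂ) := by
    rw [Complex.ofReal_mul]
    rw [show ((Real.Gamma (u+v) : ℝ) : ℂ) = Complex.Gamma ((u:ℂ) + (v:ℂ)) by
      rw [show ((u:ℂ) + (v:ℂ)) = ((u + v : ℝ) : ℂ) by push_cast; ring, Complex.Gamma_ofReal]]
    rw [show ((Real.Gamma u : ℝ) : ℂ) = Complex.Gamma (u:ℂ) from (Complex.Gamma_ofReal u).symm,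
      show ((Real.Gamma v : ℝ) : ℂ) = Complex.Gamma (v:ℂ) from (Complex.Gamma_ofReal v).symm]
    exact hmul
  have hreal : Real.Gamma u * Real.Gamma v
      = Real.Gamma (u + v) * ∫ x in (0:ℝ)..1, x ^ (u-1) * (1-x) ^ (v-1) := by
    exact_mod_cast this
  have hG' : Real.Gamma (u + v) ≠ 0 := (Real.Gamma_pos_of_pos (by linarith)).ne'
  field_simp [hG'] at hreal ⊢
  linarith [hreal]

lemma betaScaled_intervalIntegrable {μ ν t : ℝ} (hμ : -1 < μ) (hν : 0 < ν) (ht : 0 < t) :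
    IntervalIntegrable (fun s : ℝ => s ^ μ * (t - s) ^ (ν - 1)) MeasureTheory.volume 0 t := by
  have hg := beta01_intervalIntegrable (u := μ + 1) (v := ν) (by linarith) hν
  have h2 := (hg.comp_mul_left (c := t⁻¹)).const_mul (t ^ (μ + ν - 1))
  have h0 : (0:ℝ) / t⁻¹ = 0 := by simp
  have h1 : (1:ℝ) / t⁻¹ = t := by field_simp
  rw [h0, h1] at h2
  refine h2.congr ?_
  intro s hs
  beta_reduce
  rw [Set.uIoc_of_le ht.le] at hs
  have hs0 : 0 < s := hs.1
  have hst : 0 ≤ t - s := by linarith [hs.2]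
  have e1 : t⁻¹ * s = s / t := by ring
  have e2 : (1 : ℝ) - s / t = (t - s) / t := by field_simp
  rw [e1, e2, show μ + 1 - 1 = μ by ring, Real.div_rpow hs0.le ht.le,
    Real.div_rpow hst ht.le]
  rw [show μ + ν - 1 = μ + (ν - 1) by ring, Real.rpow_add ht]
  field_simp [(Real.rpow_pos_of_pos ht μ).ne', (Real.rpow_pos_of_pos ht (ν-1)).ne']

lemma betaScaled_integral {μ ν t : ℝ} (hμ : -1 < μ) (hν : 0 < ν) (ht : 0 < t) :
    ∫ s in (0:ℝ)..t, s ^ μ * (t - s) ^ (ν - 1)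
      = Real.Gamma (μ+1) * Real.Gamma ν / Real.Gamma (μ + ν + 1) * t ^ (μ + ν) := by
  have hsub := intervalIntegral.integral_comp_mul_left
    (f := fun s : ℝ => s ^ μ * (t - s) ^ (ν - 1)) (a := 0) (b := 1) (c := t) ht.ne'
  rw [mul_zero, mul_one] at hsub
  have hcong : ∫ x in (0:ℝ)..1, (t * x) ^ μ * (t - t * x) ^ (ν - 1)
      = ∫ x in (0:ℝ)..1, t ^ (μ + ν - 1) * (x ^ ((μ+1) - 1) * (1 - x) ^ (ν - 1)) := by
    refine intervalIntegral.integral_congr fun x hx => ?_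
    rw [Set.uIcc_of_le (by norm_num : (0:ℝ) ≤ 1)] at hx
    have hx0 : 0 ≤ x := hx.1
    have hx1 : 0 ≤ 1 - x := by linarith [hx.2]
    rw [show t - t * x = t * (1 - x) by ring, Real.mul_rpow ht.le hx0,
      Real.mul_rpow ht.le hx1, show μ + 1 - 1 = μ by ring,
      show μ + ν - 1 = μ + (ν - 1) by ring, Real.rpow_add ht]
    ring
  rw [hcong, intervalIntegral.integral_const_mul, beta01_integral (by linarith) hν] at hsub
  have hsub' : t ^ (μ + ν - 1) * (Real.Gamma (μ+1) * Real.Gamma ν / Real.Gamma (μ + 1 + ν))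
      = t⁻¹ * ∫ s in (0:ℝ)..t, s ^ μ * (t - s) ^ (ν - 1) := by
    simpa [smul_eq_mul] using hsub
  have hval : (∫ s in (0:ℝ)..t, s ^ μ * (t - s) ^ (ν - 1)) = t * (t ^ (μ + ν - 1) *
      (Real.Gamma (μ+1) * Real.Gamma ν / Real.Gamma (μ + 1 + ν))) := by
    rw [hsub']; field_simp
  rw [hval, show μ + ν + 1 = μ + 1 + ν by ring]
  rw [show t * (t ^ (μ + ν - 1) * (Real.Gamma (μ+1) * Real.Gamma ν / Real.Gamma (μ + 1 + ν)))
    = (t ^ (μ + ν - 1) * t ^ (1:ℝ)) * (Real.Gamma (μ+1) * Real.Gamma ν / Real.Gamma (μ + 1 + ν))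
    by rw [Real.rpow_one]; ring]
  rw [← Real.rpow_add ht, show μ + ν - 1 + 1 = μ + ν by ring]
  ring

section KernelInt

variable {ρ lam p ν t : ℝ}

/-- The `j`-th term of the series under the fractional integral. -/
noncomputable def Fterm (ρ lam p ν t : ℝ) (j : ℕ) (s : ℝ) : ℝ :=
  lam ^ j * s ^ (p + ρ * j) / Real.Gamma (p + ρ * j + 1) * (t - s) ^ (ν - 1)

lemma Fterm_eq (j : ℕ) : Fterm ρ lam p ν t j
    = fun s => (lam ^ j / Real.Gamma (p + ρ * j + 1)) * (s ^ (p + ρ * j) * (t - s) ^ (ν - 1)) := by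
  funext s; unfold Fterm; ring

lemma Fterm_integrableOn (hρ : 0 ≤ ρ) (hp : -1 < p) (hν : 0 < ν) (ht : 0 < t) (j : ℕ) :
    MeasureTheory.IntegrableOn (Fterm ρ lam p ν t j) (Set.Ioo 0 t) := by
  have he : -1 < p + ρ * j := by
    have : (0:ℝ) ≤ ρ * j := by positivity
    linarith
  have hbase := (intervalIntegrable_iff_integrableOn_Ioc_of_le ht.le).mp
    (betaScaled_intervalIntegrable he hν ht)
  rw [Fterm_eq]
  exact ((hbase.mono_set Set.Ioo_subset_Ioc_self).const_mul _)

lemma Fterm_integral (hρ : 0 ≤ ρ) (hp : -1 < p) (hν : 0 < ν) (ht : 0 < t) (j : ℕ) :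
    ∫ s in Set.Ioo 0 t, Fterm ρ lam p ν t j s
      = Real.Gamma ν * (lam ^ j * t ^ ((p + ν) + ρ * j) / Real.Gamma ((p + ν) + ρ * j + 1)) := by
  have hρj : (0:ℝ) ≤ ρ * j := by positivity
  have he : -1 < p + ρ * j := by linarith
  have hΓ1 : 0 < Real.Gamma (p + ρ * j + 1) := Real.Gamma_pos_of_pos (by linarith)
  have hΓ2 : 0 < Real.Gamma ((p + ν) + ρ * j + 1) := Real.Gamma_pos_of_pos (by linarith)
  rw [Fterm_eq, MeasureTheory.integral_const_mul, ← MeasureTheory.integral_Ioc_eq_integral_Ioo,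
    ← intervalIntegral.integral_of_le ht.le, betaScaled_integral he hν ht]
  rw [show p + ρ * j + ν = (p + ν) + ρ * j by ring]
  field_simp

lemma Fterm_lintegral (hρ : 0 ≤ ρ) (hp : -1 < p) (hν : 0 < ν) (ht : 0 < t) (j : ℕ) :
    ∫⁻ s in Set.Ioo 0 t, ‖Fterm ρ lam p ν t j s‖₊
      = ENNReal.ofReal (Real.Gamma ν *
          |lam ^ j * t ^ ((p + ν) + ρ * j) / Real.Gamma ((p + ν) + ρ * j + 1)|) := by
  have hρj : (0:ℝ) ≤ ρ * j := by positivity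
  have he : -1 < p + ρ * j := by linarith
  have hΓ1 : 0 < Real.Gamma (p + ρ * j + 1) := Real.Gamma_pos_of_pos (by linarith)
  have hΓ2 : 0 < Real.Gamma ((p + ν) + ρ * j + 1) := Real.Gamma_pos_of_pos (by linarith)
  show ∫⁻ s in Set.Ioo 0 t, ‖Fterm ρ lam p ν t j s‖ₑ = _
  rw [← MeasureTheory.ofReal_integral_norm_eq_lintegral_enorm (Fterm_integrableOn hρ hp hν ht j)]
  congr 1
  have hcong : ∫ s in Set.Ioo 0 t, ‖Fterm ρ lam p ν t j s‖
      = ∫ s in Set.Ioo 0 t, (|lam| ^ j / Real.Gamma (p + ρ * j + 1))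
          * (s ^ (p + ρ * j) * (t - s) ^ (ν - 1)) := by
    refine MeasureTheory.setIntegral_congr_fun measurableSet_Ioo fun s hs => ?_
    have hs0 : 0 < s := hs.1
    have hst : 0 < t - s := by linarith [hs.2]
    rw [Real.norm_eq_abs, Fterm_eq]
    simp only
    rw [abs_mul, abs_mul, abs_div, abs_pow, abs_of_pos hΓ1,
      abs_of_pos (Real.rpow_pos_of_pos hs0 _), abs_of_pos (Real.rpow_pos_of_pos hst _)]
  rw [hcong, MeasureTheory.integral_const_mul, ← MeasureTheory.integral_Ioc_eq_integral_Ioo,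
    ← intervalIntegral.integral_of_le ht.le, betaScaled_integral he hν ht]
  rw [show p + ρ * j + ν = (p + ν) + ρ * j by ring]
  rw [abs_div, abs_mul, abs_pow, abs_of_pos hΓ2, abs_of_pos (Real.rpow_pos_of_pos ht _)]
  field_simp

lemma Fterm_sum_eq (ht : 0 < t) {s : ℝ} (hs : s ∈ Set.Ioo 0 t) :
    Sml ρ lam p s * (t - s) ^ (ν - 1) = ∑' j : ℕ, Fterm ρ lam p ν t j s := by
  unfold Sml Fterm
  exact (tsum_mul_right).symm

lemma Fterm_norm_summable (hρ : 0 < ρ) (ht : 0 < t) {s : ℝ} (hs : s ∈ Set.Ioo 0 t) :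
    Summable fun j : ℕ => ‖Fterm ρ lam p ν t j s‖ := by
  refine Summable.congr ((sml_summable_abs hρ lam p hs.1).mul_right |(t - s) ^ (ν - 1)|)
    fun j => ?_
  rw [Real.norm_eq_abs]
  unfold Fterm
  rw [abs_mul]

lemma sml_mul_integrableOn (hρ : 0 < ρ) (hp : -1 < p) (hν : 0 < ν) (ht : 0 < t) :
    MeasureTheory.IntegrableOn (fun s => Sml ρ lam p s * (t - s) ^ (ν - 1)) (Set.Ioo 0 t) := by
  constructor
  · refine ContinuousOn.aestronglyMeasurable (ContinuousOn.mul ?_ ?_) measurableSet_Ioo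
    · exact fun s hs => ((sml_hasDerivAt hρ lam p hs.1).differentiableAt.continuousAt).continuousWithinAt
    · intro s hs
      have : t - s ≠ 0 := by have := hs.2; intro h; simp only [Set.mem_Ioo] at hs; linarith [hs.2]
      exact ((Real.continuousAt_rpow_const _ _ (Or.inl this)).comp
        ((continuous_const.sub continuous_id).continuousAt)).continuousWithinAt
  · rw [MeasureTheory.hasFiniteIntegral_def]
    have hsummand : Summable fun j : ℕ => Real.Gamma ν *
        |lam ^ j * t ^ ((p + ν) + ρ * j) / Real.Gamma ((p + ν) + ρ * j + 1)| :=
      (sml_summable_abs hρ lam (p + ν) ht).mul_left _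
    have hnonneg : ∀ j : ℕ, 0 ≤ Real.Gamma ν *
        |lam ^ j * t ^ ((p + ν) + ρ * j) / Real.Gamma ((p + ν) + ρ * j + 1)| := by
      intro j
      have := Real.Gamma_pos_of_pos hν
      positivity
    calc ∫⁻ s in Set.Ioo 0 t, ‖Sml ρ lam p s * (t - s) ^ (ν - 1)‖₊
        ≤ ∫⁻ s in Set.Ioo 0 t, ∑' j : ℕ, (‖Fterm ρ lam p ν t j s‖₊ : ENNReal) := by
          refine MeasureTheory.lintegral_mono_ae ?_
          rw [MeasureTheory.ae_restrict_iff' measurableSet_Ioo]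
          filter_upwards with s hs
          rw [Fterm_sum_eq ht hs]
          have hsum : Summable fun j : ℕ => ‖Fterm ρ lam p ν t j s‖₊ :=
            NNReal.summable_coe.mp (Summable.congr (Fterm_norm_summable hρ ht hs)
              (fun j => (coe_nnnorm _).symm))
          calc ((‖∑' j : ℕ, Fterm ρ lam p ν t j s‖₊ : ℝ≥0) : ENNReal)
              ≤ ((∑' j : ℕ, ‖Fterm ρ lam p ν t j s‖₊ : ℝ≥0) : ENNReal) := by
                exact_mod_cast ENNReal.coe_le_coe.mpr (nnnorm_tsum_le hsum)
            _ = ∑' j : ℕ, (‖Fterm ρ lam p ν t j s‖₊ : ENNReal) := ENNReal.coe_tsum hsum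
      _ = ∑' j : ℕ, ∫⁻ s in Set.Ioo 0 t, ‖Fterm ρ lam p ν t j s‖₊ :=
          MeasureTheory.lintegral_tsum fun j =>
            (Fterm_integrableOn hρ.le hp hν ht j).aestronglyMeasurable.enorm
      _ = ∑' j : ℕ, ENNReal.ofReal (Real.Gamma ν *
            |lam ^ j * t ^ ((p + ν) + ρ * j) / Real.Gamma ((p + ν) + ρ * j + 1)|) := by
          exact tsum_congr fun j => Fterm_lintegral hρ.le hp hν ht j
      _ = ENNReal.ofReal (∑' j : ℕ, Real.Gamma ν *
            |lam ^ j * t ^ ((p + ν) + ρ * j) / Real.Gamma ((p + ν) + ρ * j + 1)|) :=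
          (ENNReal.ofReal_tsum_of_nonneg hnonneg hsummand).symm
      _ < ⊤ := ENNReal.ofReal_lt_top

lemma sml_mul_integral (hρ : 0 < ρ) (hp : -1 < p) (hν : 0 < ν) (ht : 0 < t) :
    ∫ s in Set.Ioo 0 t, Sml ρ lam p s * (t - s) ^ (ν - 1)
      = Real.Gamma ν * Sml ρ lam (p + ν) t := by
  have hsummand : Summable fun j : ℕ => Real.Gamma ν *
      |lam ^ j * t ^ ((p + ν) + ρ * j) / Real.Gamma ((p + ν) + ρ * j + 1)| :=
    (sml_summable_abs hρ lam (p + ν) ht).mul_left _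
  have hnonneg : ∀ j : ℕ, 0 ≤ Real.Gamma ν *
      |lam ^ j * t ^ ((p + ν) + ρ * j) / Real.Gamma ((p + ν) + ρ * j + 1)| := by
    intro j
    have := Real.Gamma_pos_of_pos hν
    positivity
  have h1 : ∫ s in Set.Ioo 0 t, Sml ρ lam p s * (t - s) ^ (ν - 1)
      = ∫ s in Set.Ioo 0 t, ∑' j : ℕ, Fterm ρ lam p ν t j s :=
    MeasureTheory.setIntegral_congr_fun measurableSet_Ioo fun s hs => Fterm_sum_eq ht hs
  rw [h1, MeasureTheory.integral_tsum
    (fun j => (Fterm_integrableOn hρ.le hp hν ht j).aestronglyMeasurable)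
    (by
      simp only [enorm_eq_nnnorm]
      rw [funext fun j => Fterm_lintegral hρ.le hp hν ht j,
        ← ENNReal.ofReal_tsum_of_nonneg hnonneg hsummand]
      exact ENNReal.ofReal_ne_top)]
  rw [funext fun j => Fterm_integral hρ.le hp hν ht j]
  unfold Sml
  rw [tsum_mul_left]

end KernelInt

lemma ml_eq_sml {ρ : ℝ} (lam b : ℝ) {t : ℝ} (ht : 0 < t) :
    t ^ (b - 1) * mittagLeffler ρ b (lam * t ^ ρ) = Sml ρ lam (b - 1) t := by
  unfold mittagLeffler Sml
  rw [← tsum_mul_left]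
  congr 1
  funext j
  rw [mul_pow, ← Real.rpow_natCast (t ^ ρ) j, ← Real.rpow_mul ht.le,
    show ρ * (j:ℝ) + b = (b - 1) + ρ * j + 1 by ring, Real.rpow_add ht]
  ring

lemma rlKernel_combo {ι : Type*} (n : ℕ) {α lam : ℝ} (hα0 : 0 < α) (hαn : α ≤ n)
    {h : ℝ → ℝ} (s : Finset ι) (d p : ι → ℝ) (hp : ∀ k ∈ s, -1 < p k)
    (hh : Set.EqOn h (combo (2*α) lam s d p) (Set.Ioi 0)) :
    Set.EqOn (rlKernel n α h)
      (combo (2*α) lam s d (fun k => p k + ((n:ℝ) - α))) (Set.Ioi 0) := by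
  intro t ht
  have hρ : 0 < 2 * α := by linarith
  unfold rlKernel
  by_cases hcase : α = (n:ℝ)
  · rw [if_pos hcase, hh ht]
    have : (fun k => p k + ((n:ℝ) - α)) = p := by
      funext k; rw [hcase]; ring
    rw [this]
  · rw [if_neg hcase]
    have hν : 0 < (n:ℝ) - α := by
      rcases lt_or_eq_of_le hαn with h' | h'
      · linarith
      · exact absurd h' hcase
    set ν : ℝ := (n:ℝ) - α with hνdef
    have hΓν : 0 < Real.Gamma ν := Real.Gamma_pos_of_pos hν
    have ht' : (0:ℝ) < t := ht
    have hint : ∫ x in (0:ℝ)..t, h x * (t - x) ^ (ν - 1)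
        = ∑ k ∈ s, d k * (Real.Gamma ν * Sml (2*α) lam (p k + ν) t) := by
      rw [intervalIntegral.integral_of_le ht'.le, MeasureTheory.integral_Ioc_eq_integral_Ioo]
      have hcong : ∫ x in Set.Ioo (0:ℝ) t, h x * (t - x) ^ (ν - 1)
          = ∫ x in Set.Ioo (0:ℝ) t, ∑ k ∈ s, d k * (Sml (2*α) lam (p k) x * (t - x) ^ (ν - 1)) := by
        refine MeasureTheory.setIntegral_congr_fun measurableSet_Ioo fun x hx => ?_
        rw [hh (Set.mem_Ioi.mpr hx.1)]
        unfold combo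
        rw [Finset.sum_mul]
        exact Finset.sum_congr rfl fun k _ => mul_assoc _ _ _
      rw [hcong, MeasureTheory.integral_finset_sum _ fun k hk =>
        ((sml_mul_integrableOn hρ (hp k hk) hν ht').const_mul (d k))]
      exact Finset.sum_congr rfl fun k hk => by
        rw [MeasureTheory.integral_const_mul, sml_mul_integral hρ (hp k hk) hν ht']
    rw [hint, Finset.mul_sum]
    unfold combo
    refine Finset.sum_congr rfl fun k hk => ?_
    field_simp

lemma rlDeriv_combo {ι : Type*} (n : ℕ) {α lam : ℝ} (hα0 : 0 < α) (hαn : α ≤ n)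
    {h : ℝ → ℝ} (s : Finset ι) (d p : ι → ℝ) (hp : ∀ k ∈ s, -1 < p k)
    (hh : Set.EqOn h (combo (2*α) lam s d p) (Set.Ioi 0)) {t : ℝ} (ht : 0 < t) :
    rlDeriv n α h t = combo (2*α) lam s d (fun k => p k - α) t := by
  have hρ : 0 < 2 * α := by linarith
  unfold rlDeriv
  rw [iteratedDeriv_eqOn_Ioi (rlKernel_combo n hα0 hαn s d p hp hh) n (Set.mem_Ioi.mpr ht),
    combo_iteratedDeriv hρ lam s d _ n (Set.mem_Ioi.mpr ht)]
  have : (fun k => p k + ((n:ℝ) - α) - (n:ℕ)) = fun k => p k - α := by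
    funext k; push_cast; ring
  rw [this]

lemma rlDeriv_const_mul (n : ℕ) (α : ℝ) (c : ℝ) (h : ℝ → ℝ) :
    rlDeriv n α (fun s => c * h s) = fun t => c * rlDeriv n α h t := by
  unfold rlDeriv
  have hker : rlKernel n α (fun s => c * h s) = fun t => c * rlKernel n α h t := by
    unfold rlKernel
    split_ifs with hc
    · rfl
    · funext t
      simp only [mul_assoc]
      rw [intervalIntegral.integral_const_mul]
      ring
  rw [hker, iteratedDeriv_const_mul'']

lemma combo_prod_expand (ρ lam : ℝ) (m : Finset ℕ) (D1 D2 P1 P2 : ℕ → ℝ) (t : ℝ) :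
    combo ρ lam (m ×ˢ (Finset.univ : Finset Bool))
      (fun kb => if kb.2 then D2 kb.1 else D1 kb.1)
      (fun kb => if kb.2 then P2 kb.1 else P1 kb.1) t
    = (∑ k ∈ m, D1 k * Sml ρ lam (P1 k) t) + ∑ k ∈ m, D2 k * Sml ρ lam (P2 k) t := by
  unfold combo
  rw [Finset.sum_product]
  simp only [Fintype.sum_bool, Bool.false_eq_true, if_true, if_false]
  rw [Finset.sum_add_distrib]
  ring

lemma main_identity (n : ℕ) (hn : 1 ≤ n) {α : ℝ} (hn1 : (n:ℝ) - 1 < α) (hαn : α ≤ n)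
    (lam : ℝ) (C₁ C₂ : ℕ → ℝ) {h : ℝ → ℝ}
    (hh : ∀ t : ℝ, 0 < t → h t =
      (∑ k ∈ Finset.Icc 1 n, C₁ k * Sml (2*α) lam (α - k) t)
      + ∑ k ∈ Finset.Icc 1 n, C₂ k * Sml (2*α) lam (2*α - k) t)
    {t : ℝ} (ht : 0 < t) :
    rlDeriv n α h t =
      lam * (∑ k ∈ Finset.Icc 1 n, C₁ k * Sml (2*α) lam (2*α - k) t)
      + ∑ k ∈ Finset.Icc 1 n, C₂ k * Sml (2*α) lam (α - k) t := by
  have h1n : (1:ℝ) ≤ n := by exact_mod_cast hn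
  have hα0 : 0 < α := by linarith
  have hρ : 0 < 2 * α := by linarith
  have hEq : Set.EqOn h (combo (2*α) lam ((Finset.Icc 1 n) ×ˢ (Finset.univ : Finset Bool))
      (fun kb => if kb.2 then C₂ kb.1 else C₁ kb.1)
      (fun kb => if kb.2 then 2*α - kb.1 else α - kb.1)) (Set.Ioi 0) := by
    intro y hy
    exact (hh y hy).trans (combo_prod_expand (2*α) lam (Finset.Icc 1 n) C₁ C₂
      (fun k => α - (k:ℝ)) (fun k => 2*α - (k:ℝ)) y).symm
  have hp : ∀ kb ∈ (Finset.Icc 1 n) ×ˢ (Finset.univ : Finset Bool),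
      -1 < (if kb.2 then 2*α - (kb.1:ℝ) else α - kb.1) := by
    intro kb hkb
    obtain ⟨hk, -⟩ := Finset.mem_product.mp hkb
    have hk2 := (Finset.mem_Icc.mp hk).2
    have hkn : (kb.1:ℝ) ≤ n := by exact_mod_cast hk2
    split_ifs <;> linarith
  refine (rlDeriv_combo n hα0 hαn _ _ _ hp hEq ht).trans ?_
  have hfix : (fun kb : ℕ × Bool => (if kb.2 then 2*α - (kb.1:ℝ) else α - kb.1) - α)
      = fun kb : ℕ × Bool => if kb.2 then α - (kb.1:ℝ) else -(kb.1:ℝ) := by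
    funext kb
    split_ifs <;> ring
  rw [hfix]
  refine (combo_prod_expand (2*α) lam (Finset.Icc 1 n) C₁ C₂
    (fun k => -(k:ℝ)) (fun k => α - (k:ℝ)) t).trans ?_
  congr 1
  rw [Finset.mul_sum]
  refine Finset.sum_congr rfl fun k hk => ?_
  have hk1 := (Finset.mem_Icc.mp hk).1
  rw [sml_shift hρ lam hk1 ht]
  ring

lemma rlDeriv_zero_fun (n : ℕ) (α : ℝ) : rlDeriv n α (fun _ => (0:ℝ)) = fun _ => 0 := by
  have h0 : (fun _ : ℝ => (0:ℝ)) = fun s => (0:ℝ) * (fun _ : ℝ => (0:ℝ)) s := by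
    funext s; simp
  rw [h0, rlDeriv_const_mul]
  funext t
  simp

/-- The invariant solutions of the time-fractional telegraph
system with `g = λ₂ √f + f'/2`, built from the Mittag–Leffler solution of the
`W₃`-reduced system. -/
theorem mittagLeffler_invariant_solutions
    (n : ℕ) (α : ℝ) (hn : (n : ℝ) - 1 < α) (hα : α ≤ n)
    (I : Set ℝ) (hI : IsOpen I) (hIc : I.OrdConnected)
    (f : ℝ → ℝ) (hfpos : ∀ x ∈ I, 0 < f x) (hfs : ContDiffOn ℝ (⊤ : ℕ∞) f I)
    (β : ℝ) (hβ : β ∈ I) (lam₂ : ℝ) (hlam₂ : lam₂ ≠ 0)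
    (ω : ℝ → ℝ) (hω : ∀ x, ω x = ∫ r in β..x, (Real.sqrt (f r))⁻¹)
    (g : ℝ → ℝ)
    (hg : ∀ x ∈ I, g x = lam₂ * Real.sqrt (f x) + deriv f x / 2)
    (a : ℝ) (lam : ℝ) (hlam : lam = a * (a + lam₂))
    (c₁ c₂ : ℕ → ℝ) (φ ψ : ℝ → ℝ)
    (hφ : ∀ t, φ t =
      (∑ k ∈ Finset.Icc 1 n, c₁ k * t ^ (α - k) *
        mittagLeffler (2 * α) (1 + α - k) (lam * t ^ (2 * α)))
      + a * ∑ k ∈ Finset.Icc 1 n, c₂ k * t ^ (2 * α - k) *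
        mittagLeffler (2 * α) (1 + 2 * α - k) (lam * t ^ (2 * α)))
    (hψ : ∀ t, ψ t =
      (a + lam₂) * (∑ k ∈ Finset.Icc 1 n, c₁ k * t ^ (2 * α - k) *
        mittagLeffler (2 * α) (1 + 2 * α - k) (lam * t ^ (2 * α)))
      + ∑ k ∈ Finset.Icc 1 n, c₂ k * t ^ (α - k) *
        mittagLeffler (2 * α) (1 + α - k) (lam * t ^ (2 * α)))
    (u v : ℝ → ℝ → ℝ)
    (hu : ∀ x t, u x t = (Real.sqrt (f x))⁻¹ * Real.exp (a * ω x) * φ t)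
    (hv : ∀ x t, v x t = Real.exp (a * ω x) * ψ t) :
    ∀ x ∈ I, ∀ t ∈ Set.Ioi (0:ℝ),
      rlDeriv n α (fun s => u x s) t = deriv (fun y => v y t) x ∧
      rlDeriv n α (fun s => v x s) t
        = f x * deriv (fun y => u y t) x + g x * u x t := by

  intro x hx t ht
  have ht' : 0 < t := ht
  have hfx : 0 < f x := hfpos x hx
  have hsq : 0 < Real.sqrt (f x) := Real.sqrt_pos.mpr hfx
  have hcontI : ContinuousOn (fun r => (Real.sqrt (f r))⁻¹) I :=
    ((hfs.continuousOn).sqrt).inv₀ fun r hr => (Real.sqrt_pos.mpr (hfpos r hr)).ne'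
  have hii : IntervalIntegrable (fun r => (Real.sqrt (f r))⁻¹) MeasureTheory.volume β x :=
    (hcontI.mono (hIc.uIcc_subset hβ hx)).intervalIntegrable
  have hωx : HasDerivAt ω (Real.sqrt (f x))⁻¹ x := by
    have h0 : HasDerivAt (fun y => ∫ r in β..y, (Real.sqrt (f r))⁻¹)
        (Real.sqrt (f x))⁻¹ x :=
      intervalIntegral.integral_hasDerivAt_right hii
        (hcontI.stronglyMeasurableAtFilter hI x hx)
        (hcontI.continuousAt (hI.mem_nhds hx))
    have hωfun : ω = fun y => ∫ r in β..y, (Real.sqrt (f r))⁻¹ := funext hω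
    rw [hωfun]
    exact h0
  have hfd : HasDerivAt f (deriv f x) x :=
    ((hfs.contDiffAt (hI.mem_nhds hx)).differentiableAt (by simp)).hasDerivAt
  have hexp : HasDerivAt (fun y => Real.exp (a * ω y))
      (Real.exp (a * ω x) * (a * (Real.sqrt (f x))⁻¹)) x := (hωx.const_mul a).exp
  rcases Nat.eq_zero_or_pos n with hn0 | hn1
  · subst hn0
    have hφ0 : ∀ s, φ s = 0 := by intro s; rw [hφ s]; simp
    have hψ0 : ∀ s, ψ s = 0 := by intro s; rw [hψ s]; simp
    have hufun : (fun s => u x s) = fun _ => (0:ℝ) := funext fun s => by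
      rw [hu, hφ0, mul_zero]
    have hvfun : (fun s => v x s) = fun _ => (0:ℝ) := funext fun s => by
      rw [hv, hψ0, mul_zero]
    have hvy : (fun y => v y t) = fun _ => (0:ℝ) := funext fun y => by
      rw [hv, hψ0, mul_zero]
    have huy : (fun y => u y t) = fun _ => (0:ℝ) := funext fun y => by
      rw [hu, hφ0, mul_zero]
    constructor
    · rw [hufun, rlDeriv_zero_fun, hvy, deriv_const]
    · rw [hvfun, rlDeriv_zero_fun, huy, deriv_const, hu, hφ0, mul_zero]
      ring
  have h1n : (1:ℝ) ≤ n := by exact_mod_cast hn1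
  have hα0 : 0 < α := by linarith
  have hml1 : ∀ (s : ℝ), 0 < s → ∀ k : ℕ,
      s ^ (α - (k:ℝ)) * mittagLeffler (2*α) (1 + α - k) (lam * s ^ (2*α))
        = Sml (2*α) lam (α - k) s := by
    intro s hs k
    have h := ml_eq_sml (ρ := 2*α) lam (1 + α - k) hs
    rw [show (1:ℝ) + α - k - 1 = α - k by ring] at h
    exact h
  have hml2 : ∀ (s : ℝ), 0 < s → ∀ k : ℕ,
      s ^ (2*α - (k:ℝ)) * mittagLeffler (2*α) (1 + 2*α - k) (lam * s ^ (2*α))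
        = Sml (2*α) lam (2*α - k) s := by
    intro s hs k
    have h := ml_eq_sml (ρ := 2*α) lam (1 + 2*α - k) hs
    rw [show (1:ℝ) + 2*α - k - 1 = 2*α - k by ring] at h
    exact h
  have hφ' : ∀ s : ℝ, 0 < s → φ s =
      (∑ k ∈ Finset.Icc 1 n, c₁ k * Sml (2*α) lam (α - k) s)
      + ∑ k ∈ Finset.Icc 1 n, a * c₂ k * Sml (2*α) lam (2*α - k) s := by
    intro s hs
    rw [hφ s]
    congr 1
    · exact Finset.sum_congr rfl fun k _ => by rw [mul_assoc, hml1 s hs k]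
    · rw [Finset.mul_sum]
      exact Finset.sum_congr rfl fun k _ => by
        rw [mul_assoc (c₂ k), hml2 s hs k]; ring
  have hψ' : ∀ s : ℝ, 0 < s → ψ s =
      (∑ k ∈ Finset.Icc 1 n, c₂ k * Sml (2*α) lam (α - k) s)
      + ∑ k ∈ Finset.Icc 1 n, (a + lam₂) * c₁ k * Sml (2*α) lam (2*α - k) s := by
    intro s hs
    rw [hψ s, Finset.mul_sum, add_comm]
    congr 1
    · exact Finset.sum_congr rfl fun k _ => by rw [mul_assoc, hml1 s hs k]
    · exact Finset.sum_congr rfl fun k _ => by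
        rw [mul_assoc (c₁ k), hml2 s hs k]; ring
  have hDφ : rlDeriv n α φ t =
      lam * (∑ k ∈ Finset.Icc 1 n, c₁ k * Sml (2*α) lam (2*α - k) t)
      + ∑ k ∈ Finset.Icc 1 n, a * c₂ k * Sml (2*α) lam (α - k) t :=
    main_identity n hn1 hn hα lam c₁ (fun k => a * c₂ k) hφ' ht'
  have hDψ : rlDeriv n α ψ t =
      lam * (∑ k ∈ Finset.Icc 1 n, c₂ k * Sml (2*α) lam (2*α - k) t)
      + ∑ k ∈ Finset.Icc 1 n, (a + lam₂) * c₁ k * Sml (2*α) lam (α - k) t :=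
    main_identity n hn1 hn hα lam c₂ (fun k => (a + lam₂) * c₁ k) hψ' ht'
  have hDφ2 : rlDeriv n α φ t = a * ψ t := by
    rw [hDφ, hψ' t ht', mul_add, Finset.mul_sum, Finset.mul_sum, Finset.mul_sum, add_comm]
    congr 1
    · exact Finset.sum_congr rfl fun k _ => by ring
    · exact Finset.sum_congr rfl fun k _ => by rw [hlam]; ring
  have hDψ2 : rlDeriv n α ψ t = (a + lam₂) * φ t := by
    rw [hDψ, hφ' t ht', mul_add, Finset.mul_sum, Finset.mul_sum, Finset.mul_sum, add_comm]
    congr 1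
    · exact Finset.sum_congr rfl fun k _ => by ring
    · exact Finset.sum_congr rfl fun k _ => by rw [hlam]; ring
  constructor
  · -- first equation
    have hueq : (fun s => u x s)
        = fun s => ((Real.sqrt (f x))⁻¹ * Real.exp (a * ω x)) * φ s :=
      funext fun s => hu x s
    have hveq : (fun y => v y t) = fun y => Real.exp (a * ω y) * ψ t :=
      funext fun y => hv y t
    have hscale : rlDeriv n α (fun s => ((Real.sqrt (f x))⁻¹ * Real.exp (a * ω x)) * φ s) t
        = ((Real.sqrt (f x))⁻¹ * Real.exp (a * ω x)) * rlDeriv n α φ t :=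
      congrFun (rlDeriv_const_mul n α _ φ) t
    rw [hueq, hscale, hDφ2, hveq, (hexp.mul_const (ψ t)).deriv]
    ring
  · -- second equation
    have hveq : (fun s => v x s) = fun s => Real.exp (a * ω x) * ψ s :=
      funext fun s => hv x s
    have hsqrt : HasDerivAt (fun y => Real.sqrt (f y))
        (1 / (2 * Real.sqrt (f x)) * deriv f x) x :=
      (Real.hasDerivAt_sqrt hfx.ne').comp x hfd
    have hinv : HasDerivAt (fun y => (Real.sqrt (f y))⁻¹)
        (-(1 / (2 * Real.sqrt (f x)) * deriv f x) / (Real.sqrt (f x)) ^ 2) x :=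
      hsqrt.inv hsq.ne'
    have hprod := (hinv.fun_mul hexp).mul_const (φ t)
    have huyt : (fun y => u y t)
        = fun y => ((Real.sqrt (f y))⁻¹ * Real.exp (a * ω y)) * φ t := by
      funext y
      rw [hu]
    have hscale : rlDeriv n α (fun s => Real.exp (a * ω x) * ψ s) t
        = Real.exp (a * ω x) * rlDeriv n α ψ t :=
      congrFun (rlDeriv_const_mul n α _ ψ) t
    rw [hveq, hscale, hDψ2, huyt, hprod.deriv, hg x hx, hu x t]
    set r : ℝ := Real.sqrt (f x) with hrdef
    have hr2 : r * r = f x := Real.mul_self_sqrt hfx.le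
    rw [← hr2]
    field_simp
    ring
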